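/- arXiv:1810.04161 — 2 statements merged into one kernel-verified Lean document; each statement's English description precedes it below -/
import Mathlib

section
/- If S is a b-dimensional linear subspace of 𝔽₂^u, then the expected size of the largest bin over a uniformly random linear map T : 𝔽₂^u → 𝔽₂^b is O(1); concretely, E_T[max_y |T⁻¹(y) ∩ S|] = E_T[|S ∩ ker(T)|] ≤ 2 (independently of u and b). -/
/-!
Every nonempty fibre of `T` inside `S` is a translate of `S ∩ ker T`, and the fibre over `0` is
`S ∩ ker T` itself, so the largest bin is `|S ∩ ker T|`. Counting pairs `(x, T)` with `x ∈ S` and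
`T x = 0`: for `x ≠ 0` evaluation at `x` is a surjection onto `𝔽₂^b`, so `T x = 0` for a `2^{-b}`
fraction of all `T`, giving `E_T |S ∩ ker T| = 1 + (|S| - 1) / 2^b < 2` because `|S| = 2^b`.
-/

/-- The vector space 𝔽₂^n. -/
abbrev V (n : ℕ) : Type := Fin n → ZMod 2

/-- Linear maps 𝔽₂^u → 𝔽₂^b. -/
abbrev LM (u b : ℕ) : Type := V u →ₗ[ZMod 2] V b

noncomputable instance (u b : ℕ) : Fintype (LM u b) :=
  @Fintype.ofFinite _ (Finite.of_injective _ (LinearMap.coe_injective (M := V u)))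

section
variable {R M N : Type*} [Ring R] [AddCommGroup M] [Module R M] [AddCommGroup N] [Module R N]

theorem card_preimage_inter_le_card_inter_ker [Finite M] (T : M →ₗ[R] N) (S : Submodule R M)
    (y : N) : Nat.card (T ⁻¹' {y} ∩ S : Set M) ≤ Nat.card (S ∩ LinearMap.ker T : Set M) := by
  rcases (T ⁻¹' {y} ∩ S : Set M).eq_empty_or_nonempty with h | ⟨x₀, hTx₀, hx₀⟩
  · simp [h]
  let shift : (T ⁻¹' {y} ∩ S : Set M) → (S ∩ LinearMap.ker T : Set M) := fun x =>
    ⟨x - x₀, S.sub_mem x.2.2 hx₀, by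
      rw [SetLike.mem_coe, LinearMap.mem_ker, map_sub, sub_eq_zero]
      exact x.2.1.trans hTx₀.symm⟩
  exact Nat.card_le_card_of_injective shift fun _ _ h =>
    Subtype.ext (sub_left_injective (congrArg Subtype.val h))

theorem sup_card_preimage_inter [Finite M] [Fintype N] (T : M →ₗ[R] N) (S : Submodule R M) :
    (Finset.univ.sup fun y : N => Nat.card (T ⁻¹' {y} ∩ S : Set M)) =
      Nat.card (S ∩ LinearMap.ker T : Set M) := by
  refine le_antisymm (Finset.sup_le fun y _ => card_preimage_inter_le_card_inter_ker T S y) ?_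
  have hzero : T ⁻¹' {0} ∩ S = (S : Set M) ∩ LinearMap.ker T := by
    ext x; simp [and_comm]
  exact hzero ▸ Finset.le_sup (f := fun y => Nat.card (T ⁻¹' {y} ∩ S : Set M)) (Finset.mem_univ 0)

end

section
variable {K M N : Type*} [Field K] [AddCommGroup M] [Module K M] [AddCommGroup N] [Module K N]

theorem LinearMap.applyₗ_surjective {x : M} (hx : x ≠ 0) :
    Function.Surjective (LinearMap.applyₗ x : (M →ₗ[K] N) →ₗ[K] N) := by
  obtain ⟨f, hf⟩ := Module.Projective.exists_dual_eq_one K hx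
  exact fun y => ⟨f.smulRight y, by simp [hf]⟩

theorem card_linearMap_apply_eq_zero_mul_card {x : M} (hx : x ≠ 0) :
    Nat.card {T : M →ₗ[K] N // T x = 0} * Nat.card N = Nat.card (M →ₗ[K] N) := by
  let ev : (M →ₗ[K] N) →ₗ[K] N := LinearMap.applyₗ x
  rw [Submodule.card_eq_card_quotient_mul_card (LinearMap.ker ev),
    Nat.card_congr (ev.quotKerEquivOfSurjective (LinearMap.applyₗ_surjective hx)).toEquiv]
  rfl

-- `E_T |S ∩ ker T| = 1 + (|S| - 1) / |N|`, cleared of subtraction and division.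
theorem sum_card_inter_ker_mul_card_add_card [Fintype (M →ₗ[K] N)] [Finite M]
    (S : Submodule K M) :
    (∑ T : M →ₗ[K] N, Nat.card (S ∩ LinearMap.ker T : Set M)) * Nat.card N +
        Fintype.card (M →ₗ[K] N) =
      Fintype.card (M →ₗ[K] N) * Nat.card N + Nat.card S * Fintype.card (M →ₗ[K] N) := by
  classical
  have : Fintype M := Fintype.ofFinite M
  have hcount (T : M →ₗ[K] N) :
      Nat.card (S ∩ LinearMap.ker T : Set M) = ∑ x : S, if T x = 0 then 1 else 0 := by
    rw [← Finset.card_filter, ← Fintype.card_subtype, ← Nat.card_eq_fintype_card]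
    exact Nat.card_congr
      ⟨fun x => ⟨⟨x, x.2.1⟩, x.2.2⟩, fun x => ⟨x.1, x.1.2, x.2⟩, fun _ => rfl, fun _ => rfl⟩
  have hdouble : ∑ T : M →ₗ[K] N, Nat.card (S ∩ LinearMap.ker T : Set M) =
      ∑ x : S, Nat.card {T : M →ₗ[K] N // T x = 0} := by
    simp_rw [hcount, Finset.sum_comm (γ := M →ₗ[K] N), ← Finset.card_filter,
      ← Fintype.card_subtype, Nat.card_eq_fintype_card]
  have hterm (x : S) : Nat.card {T : M →ₗ[K] N // T x = 0} * Nat.card N +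
      (if x = 0 then Fintype.card (M →ₗ[K] N) else 0) =
      (if x = 0 then Fintype.card (M →ₗ[K] N) * Nat.card N else 0) + Fintype.card (M →ₗ[K] N) := by
    rcases eq_or_ne x 0 with rfl | hx
    · simp [Nat.card_eq_fintype_card]
    · rw [if_neg hx, if_neg hx, card_linearMap_apply_eq_zero_mul_card (by simpa using hx),
        Nat.card_eq_fintype_card, add_comm]
  have hsum := Finset.sum_congr rfl fun x (_ : x ∈ Finset.univ) => hterm x
  simp only [Finset.sum_add_distrib, ← Finset.sum_mul, Finset.sum_ite_eq', Finset.mem_univ,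
    if_true, Finset.sum_const, Finset.card_univ, smul_eq_mul] at hsum
  rw [hdouble, hsum, Fintype.card_eq_nat_card (α := S)]

theorem sum_card_inter_ker_le_two_mul [Fintype (M →ₗ[K] N)] [Finite M] [Finite N]
    (S : Submodule K M) (hS : Nat.card S ≤ Nat.card N) :
    ∑ T : M →ₗ[K] N, Nat.card (S ∩ LinearMap.ker T : Set M) ≤ 2 * Fintype.card (M →ₗ[K] N) := by
  have hdc := sum_card_inter_ker_mul_card_add_card (N := N) S
  refine Nat.le_of_mul_le_mul_right ?_ (Nat.card_pos (α := N))
  nlinarith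
end

theorem stmt_5_general (u b : ℕ) (S : Submodule (ZMod 2) (V u))
    (hS : Module.finrank (ZMod 2) S = b) :
    (∑ T : LM u b, ((Finset.univ.sup fun y : V b =>
          Nat.card ((T ⁻¹' {y}) ∩ (S : Set (V u)) : Set (V u)) : ℕ) : ℝ)) /
        (Fintype.card (LM u b)) =
      (∑ T : LM u b,
          (Nat.card ((S : Set (V u)) ∩ (LinearMap.ker T : Set (V u)) : Set (V u)) : ℝ)) /
        (Fintype.card (LM u b)) ∧
    (∑ T : LM u b, ((Finset.univ.sup fun y : V b =>
          Nat.card ((T ⁻¹' {y}) ∩ (S : Set (V u)) : Set (V u)) : ℕ) : ℝ)) /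
        (Fintype.card (LM u b)) ≤ 2 := by
  simp only [sup_card_preimage_inter, true_and]
  have hcard : Nat.card S = Nat.card (V b) := by
    have := Fintype.ofFinite S
    rw [Nat.card_eq_fintype_card, Module.card_eq_pow_finrank (K := ZMod 2), hS]
    simp
  have hsum := sum_card_inter_ker_le_two_mul S hcard.le
  rw [div_le_iff₀ (by exact_mod_cast Fintype.card_pos)]
  exact_mod_cast hsum

/-- If S is a b-dimensional subspace of 𝔽₂^u, then the expected largest bin size
over a uniformly random linear map T : 𝔽₂^u → 𝔽₂^b equals E_T[|S ∩ ker T|] and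
is at most 2. -/
theorem stmt_5 (u b : ℕ) (hbu : b ≤ u) (S : Submodule (ZMod 2) (V u))
    (hS : Module.finrank (ZMod 2) S = b) :
    (∑ T : LM u b, ((Finset.univ.sup fun y : V b =>
          Nat.card ((T ⁻¹' {y}) ∩ (S : Set (V u)) : Set (V u)) : ℕ) : ℝ)) /
        (Fintype.card (LM u b)) =
      (∑ T : LM u b,
          (Nat.card ((S : Set (V u)) ∩ (LinearMap.ker T : Set (V u)) : Set (V u)) : ℝ)) /
        (Fintype.card (LM u b)) ∧
    (∑ T : LM u b, ((Finset.univ.sup fun y : V b =>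
          Nat.card ((T ⁻¹' {y}) ∩ (S : Set (V u)) : Set (V u)) : ℕ) : ℝ)) /
        (Fintype.card (LM u b)) ≤ 2 :=
  stmt_5_general u b S hS
end

section
/- The function g(x) = x^(−log₂ b + log₂(1/x) + log₂ log₂(1/x)) is monotone increasing on an interval of the form (0, δ) for suitable δ ∈ (0,1) whenever b ≥ 2. (Monotonicity of the bound used in the proof of the tail estimate.) -/
/-!
Write `g x = exp (log x * E x)` with `E x = -log₂ b - log₂ x + log₂ log₂ (1/x)`. On `(0, 1)` the
factor `log x` is negative and increasing while `E` is decreasing, and `E ≥ 0` once `x ≤ 1/b`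
(then `log₂ (1/x) ≥ log₂ b ≥ 1`). A nonpositive increasing function times a nonnegative
decreasing one is increasing, so `g` is increasing on `(0, 1/b)`.
-/

open Real Set

theorem MonotoneOn.mul_antitoneOn_of_nonpos_of_nonneg {α R : Type*} [Preorder α] [Ring R]
    [PartialOrder R] [IsOrderedRing R] {f g : α → R} {s : Set α}
    (hf : MonotoneOn f s) (hg : AntitoneOn g s) (hf₀ : ∀ x ∈ s, f x ≤ 0)
    (hg₀ : ∀ x ∈ s, 0 ≤ g x) : MonotoneOn (f * g) s := fun _ hx _ hy hxy =>
  mul_le_mul_of_nonpos_of_nonneg (hf hx hy hxy) (hg hx hy hxy) (hf₀ _ hy) (hg₀ _ hx)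

theorem monotoneOn_rpow_of_antitoneOn_exponent {E : ℝ → ℝ} {s : Set ℝ} (hs : s ⊆ Ioo 0 1)
    (hE : AntitoneOn E s) (hE₀ : ∀ x ∈ s, 0 ≤ E x) : MonotoneOn (fun x => x ^ E x) s := by
  have hlog : MonotoneOn (fun x => log x * E x) s :=
    (strictMonoOn_log.monotoneOn.mono fun x hx => (hs hx).1).mul_antitoneOn_of_nonpos_of_nonneg hE
      (fun x hx => (log_neg (hs hx).1 (hs hx).2).le) hE₀
  exact (exp_monotone.comp_monotoneOn hlog).congr fun x hx => (rpow_def_of_pos (hs hx).1 _).symm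

noncomputable def tailExponent (b x : ℝ) : ℝ :=
  -logb 2 b - logb 2 x + logb 2 (logb 2 (1 / x))

theorem antitoneOn_tailExponent (b : ℝ) : AntitoneOn (tailExponent b) (Ioo 0 1) := by
  intro x hx y hy hxy
  have hy₀ : 0 < logb 2 (1 / y) :=
    logb_pos one_lt_two ((one_lt_div hy.1).2 hy.2)
  have hlogb : logb 2 (1 / y) ≤ logb 2 (1 / x) :=
    logb_le_logb_of_le one_lt_two (by simpa using hy.1) (one_div_le_one_div_of_le hx.1 hxy)
  have hxy₂ := logb_le_logb_of_le one_lt_two hx.1 hxy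
  have hloglog := logb_le_logb_of_le one_lt_two hy₀ hlogb
  unfold tailExponent
  linarith

theorem tailExponent_nonneg {b x : ℝ} (hb : 2 ≤ b) (hx₀ : 0 < x) (hx : x ≤ b⁻¹) :
    0 ≤ tailExponent b x := by
  have hb₀ : 0 < b := by linarith
  have hxb : b ≤ 1 / x := by rw [one_div]; exact le_inv_of_le_inv₀ hx₀ hx
  have hlog : logb 2 b ≤ logb 2 (1 / x) := logb_le_logb_of_le one_lt_two hb₀ hxb
  have hone : 1 ≤ logb 2 (1 / x) := by
    calc 1 = logb 2 2 := (logb_self_eq_one one_lt_two).symm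
      _ ≤ logb 2 b := logb_le_logb_of_le one_lt_two two_pos hb
      _ ≤ logb 2 (1 / x) := hlog
  have hloglog := logb_nonneg one_lt_two hone
  rw [one_div, logb_inv] at hlog
  unfold tailExponent
  linarith

/-- For b ≥ 2, the function g(x) = x^(−log₂ b − log₂ x + log₂ log₂ (1/x)) is
monotone increasing on an interval (0, δ) for some δ ∈ (0,1). -/
theorem stmt_10 (b : ℝ) (hb : 2 ≤ b) :
    ∃ δ : ℝ, δ ∈ Set.Ioo (0 : ℝ) 1 ∧
      MonotoneOn (fun x : ℝ =>
          x ^ (-Real.logb 2 b - Real.logb 2 x + Real.logb 2 (Real.logb 2 (1 / x))))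
        (Set.Ioo (0 : ℝ) δ) := by
  have hδ : b⁻¹ ∈ Ioo (0 : ℝ) 1 := ⟨by positivity, inv_lt_one_of_one_lt₀ (by linarith)⟩
  have hsub : Ioo 0 b⁻¹ ⊆ Ioo (0 : ℝ) 1 := Ioo_subset_Ioo_right hδ.2.le
  refine ⟨b⁻¹, hδ, monotoneOn_rpow_of_antitoneOn_exponent (E := tailExponent b) hsub
    ((antitoneOn_tailExponent b).mono hsub) fun x hx => tailExponent_nonneg hb hx.1 hx.2.le⟩
end
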